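/- Let X_1, …, X_n be random variables on a probability space such that the product ∏_{i ∈ T} X_i is integrable for every subset T of {1, …, n}. Then E[∏_{i=1}^n X_i] = ∑_{τ ∈ P({1,…,n})} ∏_{β ∈ τ} κ((X_i)_{i ∈ β}), where the sum ranges over all partitions τ of {1, …, n} into nonempty blocks and κ((X_i)_{i ∈ β}) denotes the joint cumulant of the family of random variables indexed by the block β. -/

import Mathlib

open MeasureTheory

/-- The joint cumulant of the family of random variables `(X i)_{i ∈ s}`:
`κ((X i)_{i ∈ s}) = ∑_{σ ∈ P(s)} (-1)^(|σ|-1) (|σ|-1)! ∏_{γ ∈ σ} E[∏_{i ∈ γ} X i]`,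
where the sum is over all partitions `σ` of the finite index set `s`. -/
noncomputable def jointCumulant {Ω : Type*} [MeasureSpace Ω] {ι : Type*} [DecidableEq ι]
    (X : ι → Ω → ℝ) (s : Finset ι) : ℝ :=
  ∑ σ : Finpartition s,
    (-1 : ℝ) ^ (σ.parts.card - 1) * (Nat.factorial (σ.parts.card - 1)) *
      ∏ γ ∈ σ.parts, ∫ ω, ∏ i ∈ γ, X i ω

/-!
Write `m T = E[∏ i ∈ T, X i]`; the identity holds for any `m : Finset ι → R` with `m ∅ = 1`.
By induction on `s`, grouping the partitions of `s` by the block `b` that contains a fixed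
`x ∈ s` reduces it to the recurrence `∑_{x ∈ b ⊆ s} κ(b) m(s \ b) = m(s)`. Expanding `κ(b)` and
adding `s \ b` as a block turns the left side into a sum over partitions `ρ` of `s`, each
occurring once with coefficient `c(#ρ)` and once with `c(#ρ - 1)` for each of its `#ρ - 1`
blocks avoiding `x`, where `c(k) = (-1)^(k-1) (k-1)!`. Since `c(k) + (k-1) c(k-1) = 0` for
`k ≥ 2`, only the one-block partition survives.
-/

open Finset

namespace Finpartition

variable {ι : Type*} [DecidableEq ι] {s b : Finset ι} {x : ι}

lemma parts_avoid_of_mem (P : Finpartition s) (hb : b ∈ P.parts) :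
    (P.avoid b).parts = P.parts.erase b := by
  ext u
  rw [mem_avoid, mem_erase]
  constructor
  · rintro ⟨d, hd, hdb, rfl⟩
    have hne : d ≠ b := fun h => hdb h.le
    have hdisj : Disjoint d b := P.disjoint hd hb hne
    rw [sdiff_eq_self_of_disjoint hdisj]
    exact ⟨hne, hd⟩
  · rintro ⟨hne, hu⟩
    have hdisj : Disjoint u b := P.disjoint hu hb hne
    exact ⟨u, hu, fun hle => P.ne_bot hu (hdisj.eq_bot_of_le hle),
      sdiff_eq_self_of_disjoint hdisj⟩

lemma filter_mem_parts_eq_singleton_part (P : Finpartition s) (hx : x ∈ s) :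
    {b ∈ P.parts | x ∈ b} = {P.part x} := by
  ext b
  rw [mem_filter, mem_singleton]
  constructor
  · rintro ⟨hb, hxb⟩
    exact (P.part_eq_of_mem hb hxb).symm
  · rintro rfl
    exact ⟨P.part_mem.2 hx, P.mem_part_self.2 hx⟩

lemma card_filter_notMem_parts (P : Finpartition s) (hx : x ∈ s) :
    #{b ∈ P.parts | x ∉ b} = #P.parts - 1 := by
  rw [filter_not, filter_mem_parts_eq_singleton_part P hx, sdiff_singleton_eq_erase,
    card_erase_of_mem (P.part_mem.2 hx)]

lemma card_parts_eq_one_iff (P : Finpartition s) (hs : s ≠ ∅) :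
    #P.parts = 1 ↔ P = indiscrete hs := by
  constructor
  · intro h
    obtain ⟨b, hb⟩ := card_eq_one.1 h
    have hbs : b = s := by simpa [hb] using P.sup_parts
    exact Finpartition.ext (by rw [hb, hbs]; rfl)
  · rintro rfl
    exact card_singleton s

/-- The bijection `(P, b) ↦ (b, P.avoid b)`, with inverse `(b, Q) ↦ Q.extend b`, between partitions
of `s` with a marked block and blocks `b ⊆ s` together with a partition of `s \ b`. -/
theorem sum_sum_parts_erase_eq_sum_powerset {M : Type*} [AddCommMonoid M] (s : Finset ι)
    (p : Finset ι → Prop) [DecidablePred p] (G : Finset ι → Finset (Finset ι) → M) :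
    ∑ P : Finpartition s, ∑ b ∈ P.parts with p b, G b (P.parts.erase b) =
      ∑ b ∈ s.powerset with b.Nonempty ∧ p b, ∑ Q : Finpartition (s \ b), G b Q.parts := by
  rw [sum_sigma', sum_sigma']
  refine sum_bij' (fun q _ => ⟨q.2, q.1.avoid q.2⟩)
    (fun q hq => ⟨q.2.extend (b := q.1) (c := s) ?_ sdiff_disjoint ?_, q.1⟩) ?_ ?_ ?_ ?_ ?_
  · simp only [mem_sigma, mem_filter, mem_powerset] at hq
    exact hq.1.2.1.ne_empty
  · simp only [mem_sigma, mem_filter, mem_powerset] at hq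
    exact sdiff_union_of_subset hq.1.1
  · rintro ⟨P, b⟩ h
    simp only [mem_sigma, mem_filter, mem_univ, true_and] at h
    simp only [mem_sigma, mem_filter, mem_powerset, mem_univ, and_true]
    exact ⟨P.le h.1, P.nonempty_of_mem_parts h.1, h.2⟩
  · rintro ⟨b, Q⟩ h
    simp only [mem_sigma, mem_filter, mem_powerset, mem_univ, and_true, true_and] at h ⊢
    exact ⟨mem_insert_self _ _, h.2.2⟩
  · rintro ⟨P, b⟩ h
    simp only [mem_sigma, mem_filter, mem_univ, true_and] at h
    refine Sigma.ext (Finpartition.ext ?_) HEq.rfl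
    simp [parts_avoid_of_mem P h.1, insert_erase h.1]
  · rintro ⟨b, Q⟩ h
    simp only [mem_sigma, mem_filter, mem_powerset] at h
    obtain ⟨y, hy⟩ := h.1.2.1
    have hbQ : b ∉ Q.parts := fun hb => (mem_sdiff.1 (Q.le hb hy)).2 hy
    refine Sigma.ext rfl (heq_of_eq (Finpartition.ext ?_))
    rw [parts_avoid_of_mem _ (mem_insert_self _ _), extend_parts, erase_insert hbQ]
  · rintro ⟨P, b⟩ h
    simp only [mem_sigma, mem_filter, mem_univ, true_and] at h
    simp [parts_avoid_of_mem P h.1]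

theorem sum_prod_parts_eq_sum_mul_sum {R : Type*} [CommSemiring R] (f : Finset ι → R)
    (hx : x ∈ s) :
    ∑ P : Finpartition s, ∏ β ∈ P.parts, f β =
      ∑ b ∈ s.powerset with x ∈ b, f b * ∑ Q : Finpartition (s \ b), ∏ β ∈ Q.parts, f β := by
  have hsplit (P : Finpartition s) :
      ∏ β ∈ P.parts, f β = ∑ b ∈ P.parts with x ∈ b, f b * ∏ β ∈ P.parts.erase b, f β := by
    rw [filter_mem_parts_eq_singleton_part P hx, sum_singleton,
      mul_prod_erase _ _ (P.part_mem.2 hx)]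
  simp_rw [hsplit, mul_sum,
    sum_sum_parts_erase_eq_sum_powerset s (x ∈ ·) (fun b Ps => f b * ∏ β ∈ Ps, f β)]
  refine sum_congr (filter_congr fun b _ => ?_) fun _ _ => rfl
  exact and_iff_right_of_imp fun hxb => ⟨x, hxb⟩

end Finpartition

section Cumulant

variable {ι R : Type*} [DecidableEq ι] [CommRing R]

variable (R) in
def cumulantCoeff (k : ℕ) : R := (-1) ^ (k - 1) * ((k - 1).factorial : R)

lemma cumulantCoeff_add_mul_cumulantCoeff_sub_one {k : ℕ} (hk : 1 ≤ k) :
    cumulantCoeff R k + (k - 1 : ℕ) * cumulantCoeff R (k - 1) = if k = 1 then 1 else 0 := by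
  match k, hk with
  | 1, _ => simp [cumulantCoeff]
  | j + 2, _ =>
    simp only [cumulantCoeff, if_neg (by omega : j + 2 ≠ 1), Nat.add_sub_cancel,
      show j + 2 - 1 = j + 1 by omega, Nat.factorial_succ]
    push_cast
    ring

def cumulantOfMoments (m : Finset ι → R) (s : Finset ι) : R :=
  ∑ σ : Finpartition s, cumulantCoeff R #σ.parts * ∏ γ ∈ σ.parts, m γ

variable {m : Finset ι → R} {s : Finset ι} {x : ι}

lemma sum_cumulantOfMoments_sdiff_mul_eq_sum_card_parts (hx : x ∈ s) :
    ∑ b ∈ s.powerset with b.Nonempty ∧ x ∉ b, cumulantOfMoments m (s \ b) * m b =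
      ∑ P : Finpartition s,
        ((#P.parts - 1 : ℕ) : R) * cumulantCoeff R (#P.parts - 1) * ∏ γ ∈ P.parts, m γ := by
  simp_rw [cumulantOfMoments, sum_mul]
  rw [← Finpartition.sum_sum_parts_erase_eq_sum_powerset s (x ∉ ·)
    (fun b Ps => cumulantCoeff R #Ps * (∏ γ ∈ Ps, m γ) * m b)]
  refine sum_congr rfl fun P _ => ?_
  calc _ = ∑ b ∈ P.parts with x ∉ b, cumulantCoeff R (#P.parts - 1) * ∏ γ ∈ P.parts, m γ := by
        refine sum_congr rfl fun b hb => ?_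
        have hbP := (mem_filter.1 hb).1
        rw [card_erase_of_mem hbP, mul_assoc, prod_erase_mul _ _ hbP]
    _ = _ := by rw [sum_const, P.card_filter_notMem_parts hx, nsmul_eq_mul, mul_assoc]

theorem sum_cumulantOfMoments_mul_sdiff (hm : m ∅ = 1) (hx : x ∈ s) :
    ∑ b ∈ s.powerset with x ∈ b, cumulantOfMoments m b * m (s \ b) = m s := by
  have hs : s ≠ ∅ := ne_empty_of_mem hx
  have hcompl : ∑ b ∈ s.powerset with x ∈ b, cumulantOfMoments m b * m (s \ b) =
      ∑ b ∈ s.powerset with x ∉ b, cumulantOfMoments m (s \ b) * m b := by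
    refine sum_nbij' (s \ ·) (s \ ·) ?_ ?_ ?_ ?_ ?_ <;> simp only [mem_filter, mem_powerset]
    · exact fun b hb => ⟨sdiff_subset, fun h => (mem_sdiff.1 h).2 hb.2⟩
    · exact fun b hb => ⟨sdiff_subset, mem_sdiff.2 ⟨hx, hb.2⟩⟩
    · exact fun b hb => Finset.sdiff_sdiff_eq_self hb.1
    · exact fun b hb => Finset.sdiff_sdiff_eq_self hb.1
    · exact fun b hb => by rw [Finset.sdiff_sdiff_eq_self hb.1]
  have herase : ({b ∈ s.powerset | x ∉ b} : Finset _).erase ∅ =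
      {b ∈ s.powerset | b.Nonempty ∧ x ∉ b} := by
    ext b
    simp only [mem_erase, mem_filter, mem_powerset, nonempty_iff_ne_empty]
    tauto
  have hempty : ∅ ∈ ({b ∈ s.powerset | x ∉ b} : Finset _) := by simp
  rw [hcompl, ← add_sum_erase _ _ hempty, herase,
    sum_cumulantOfMoments_sdiff_mul_eq_sum_card_parts hx, sdiff_empty, hm, mul_one,
    cumulantOfMoments, ← sum_add_distrib]
  have hcoeff (P : Finpartition s) :
      cumulantCoeff R #P.parts * ∏ γ ∈ P.parts, m γ +
        ((#P.parts - 1 : ℕ) : R) * cumulantCoeff R (#P.parts - 1) * ∏ γ ∈ P.parts, m γ =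
      if P = Finpartition.indiscrete hs then ∏ γ ∈ P.parts, m γ else 0 := by
    rw [← add_mul, cumulantCoeff_add_mul_cumulantCoeff_sub_one
      (card_pos.2 (P.parts_nonempty hs))]
    simp only [P.card_parts_eq_one_iff hs, ite_mul, one_mul, zero_mul]
  simp_rw [hcoeff, sum_ite_eq', mem_univ, if_true, Finpartition.indiscrete_parts, prod_singleton]

theorem sum_prod_cumulantOfMoments (hm : m ∅ = 1) (s : Finset ι) :
    ∑ P : Finpartition s, ∏ β ∈ P.parts, cumulantOfMoments m β = m s := by
  induction s using Finset.strongInduction with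
  | H s ih =>
  rcases s.eq_empty_or_nonempty with rfl | ⟨x, hx⟩
  · have hparts (P : Finpartition (∅ : Finset ι)) : P.parts = ∅ := P.parts_eq_empty_iff.2 rfl
    have : Subsingleton (Finpartition (∅ : Finset ι)) :=
      ⟨fun P Q => Finpartition.ext (by rw [hparts, hparts])⟩
    rw [Fintype.sum_subsingleton _ ⊥, hparts, prod_empty, hm]
  · rw [Finpartition.sum_prod_parts_eq_sum_mul_sum _ hx,
      ← sum_cumulantOfMoments_mul_sdiff hm hx]
    refine sum_congr rfl fun b hb => ?_
    rw [mem_filter, mem_powerset] at hb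
    rw [ih _ (sdiff_ssubset hb.1 ⟨x, hb.2⟩)]

end Cumulant

theorem integral_prod_eq_sum_prod_jointCumulant_general {Ω : Type*} [MeasureSpace Ω]
    [IsProbabilityMeasure (volume : Measure Ω)]
    (n : ℕ) (X : Fin n → Ω → ℝ) :
    (∫ ω, ∏ i, X i ω) =
      ∑ τ : Finpartition (Finset.univ : Finset (Fin n)),
        ∏ β ∈ τ.parts, jointCumulant X β :=
  (sum_prod_cumulantOfMoments (m := fun T => ∫ ω, ∏ i ∈ T, X i ω) (by simp) univ).symm

/-- Moments from cumulants: `E[∏ i, X i] = ∑_{τ ∈ P({1,…,n})} ∏_{β ∈ τ} κ((X i)_{i ∈ β})`. -/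
theorem integral_prod_eq_sum_prod_jointCumulant {Ω : Type*} [MeasureSpace Ω]
    [IsProbabilityMeasure (volume : Measure Ω)]
    (n : ℕ) (X : Fin n → Ω → ℝ)
    (hint : ∀ T : Finset (Fin n), Integrable (fun ω => ∏ i ∈ T, X i ω)) :
    (∫ ω, ∏ i, X i ω) =
      ∑ τ : Finpartition (Finset.univ : Finset (Fin n)),
        ∏ β ∈ τ.parts, jointCumulant X β :=
  integral_prod_eq_sum_prod_jointCumulant_general n X
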